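/- For odd k ≥ 5 and even ℓ ≥ 0, the Shannon capacity of the Tadpole graph satisfies Θ(T(k,ℓ)) = Θ(C_k) + ℓ/2, where C_k is the k-cycle. -/

import Mathlib

/-!
Write `l = 2c` and `H = C_k ⊕ c` isolated vertices. The tadpole and `H` admit homomorphisms of
their complements in both directions (contract each path edge `{k + 2u, k + 2u + 1}` to a point;
send the point `u` to the path vertex `k + 2u + 1`), so every strong power of one has the
independence number of the same power of the other, and `Θ(T(k, 2c)) = Θ(H)`.

For `H = G ⊕ ⊥_W`, a vertex of `Hⁿ` is determined by its pattern `w : Fin n → Option W` (`none`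
marking the `G`-coordinates) together with its `G`-coordinates, and vertices with different
patterns are never adjacent. Hence `α(Hⁿ) = ∑_w α(G^{#w⁻¹(none)})`. Bounding `α(Gʲ) ≤ Θ(G)ʲ`,
the binomial theorem gives `α(Hⁿ) ≤ (Θ(G) + |W|)ⁿ`. Conversely, supermultiplicativity gives
`α(G^m)^{j/m} ≤ α(G^m) α(Gʲ)`, so `(α(G^m)^{1/m} + |W|)ⁿ ≤ α(G^m) Θ(H)ⁿ` for all `n`, and letting
`n → ∞` yields `α(G^m)^{1/m} + |W| ≤ Θ(H)`.
-/


namespace Paper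

def strongProd {V W : Type*} (G : SimpleGraph V) (H : SimpleGraph W) : SimpleGraph (V × W) :=
  SimpleGraph.fromRel (fun x y =>
    (x.1 = y.1 ∨ G.Adj x.1 y.1) ∧ (x.2 = y.2 ∨ H.Adj x.2 y.2))

def strongPow {V : Type*} (G : SimpleGraph V) (k : ℕ) : SimpleGraph (Fin k → V) :=
  SimpleGraph.fromRel (fun x y => ∀ i, x i = y i ∨ G.Adj (x i) (y i))

noncomputable def indepNum {V : Type*} [Fintype V] (G : SimpleGraph V) : ℕ :=
  sSup {n | ∃ s : Finset V, (∀ a ∈ s, ∀ b ∈ s, a ≠ b → ¬ G.Adj a b) ∧ s.card = n}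

noncomputable def shannonCapacity {V : Type*} [Fintype V] (G : SimpleGraph V) : ℝ :=
  ⨆ k : ℕ, (indepNum (strongPow G (k + 1)) : ℝ) ^ ((1 : ℝ) / (k + 1))

noncomputable def lovaszTheta {V : Type*} [Fintype V] (G : SimpleGraph V) : ℝ :=
  sSup {x : ℝ | ∃ B : Matrix V V ℝ, B.PosSemidef ∧ B.trace = 1 ∧
    (∀ i j, G.Adj i j → B i j = 0) ∧ x = ∑ i, ∑ j, B i j}

noncomputable def fracIndepNum {V : Type*} [Fintype V] (G : SimpleGraph V) : ℝ :=
  sSup {x : ℝ | ∃ f : V → ℝ, (∀ v, 0 ≤ f v) ∧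
    (∀ s : Finset V, G.IsClique (s : Set V) → ∑ v ∈ s, f v ≤ 1) ∧ x = ∑ v, f v}

def Universal {V : Type*} [Fintype V] (G : SimpleGraph V) : Prop :=
  ∀ (W : Type) [Fintype W] (H : SimpleGraph W),
    indepNum (strongProd G H) = indepNum G * indepNum H

def sigmaUnion {ι : Type*} {V : ι → Type*} (G : ∀ i, SimpleGraph (V i)) :
    SimpleGraph (Σ i, V i) :=
  SimpleGraph.fromRel (fun x y =>
    ∃ i, ∃ a b : V i, (G i).Adj a b ∧ x = ⟨i, a⟩ ∧ y = ⟨i, b⟩)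

def piStrongProd {ι : Type*} {V : ι → Type*} (G : ∀ i, SimpleGraph (V i)) :
    SimpleGraph (∀ i, V i) :=
  SimpleGraph.fromRel (fun x y => ∀ i, x i = y i ∨ (G i).Adj (x i) (y i))

def tadpole (k l : ℕ) : SimpleGraph (Fin (k + l)) :=
  SimpleGraph.fromRel (fun x y =>
    ((x : ℕ) < k ∧ (y : ℕ) < k ∧ ((x : ℕ) + 1) % k = (y : ℕ)) ∨
    (k ≤ (x : ℕ) ∧ (y : ℕ) = (x : ℕ) + 1) ∨
    ((x : ℕ) = 0 ∧ (y : ℕ) = k))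


open SimpleGraph Finset

section IndependenceNumber

variable {V W : Type*} {G : SimpleGraph V} {H : SimpleGraph W}

theorem cliqueNum_le_of_hom [Finite W] (f : G →g H) : G.cliqueNum ≤ H.cliqueNum := by
  classical
  obtain ⟨s, hs⟩ := G.exists_isNClique_cliqueNum
  have hinj : Set.InjOn f s := fun a ha b hb hab => by
    by_contra hne
    exact H.ne_of_adj (f.map_adj (hs.isClique ha hb hne)) hab
  have hclique : H.IsClique (s.image f : Set W) := by
    rw [coe_image]
    rintro _ ⟨a, ha, rfl⟩ _ ⟨b, hb, rfl⟩ hne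
    exact f.map_adj (hs.isClique ha hb (ne_of_apply_ne f hne))
  rw [← hs.card_eq, ← card_image_of_injOn hinj]
  exact hclique.card_le_cliqueNum

theorem indepNum_eq_simpleGraph_indepNum [Fintype V] (G : SimpleGraph V) : indepNum G = G.indepNum := by
  simp only [indepNum, SimpleGraph.indepNum, isNIndepSet_iff, IsIndepSet, Set.Pairwise, mem_coe]

theorem indepNum_le_of_hom_compl [Fintype V] [Fintype W] (f : Gᶜ →g Hᶜ) :
    indepNum G ≤ indepNum H := by
  simpa only [indepNum_eq_simpleGraph_indepNum, cliqueNum_compl] using cliqueNum_le_of_hom f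

theorem one_le_indepNum [Fintype V] [Nonempty V] : 1 ≤ indepNum G := by
  have hs : G.IsIndepSet (({Classical.arbitrary V} : Finset V) : Set V) := by simp
  simpa [indepNum_eq_simpleGraph_indepNum] using hs.card_le_indepNum

theorem indepNum_le_card [Fintype V] : indepNum G ≤ Fintype.card V := by
  obtain ⟨s, hs⟩ := G.exists_isNIndepSet_indepNum
  rw [indepNum_eq_simpleGraph_indepNum, ← hs.card_eq]
  exact card_le_univ s

end IndependenceNumber

section StrongProduct

theorem compl_piStrongProd_adj {ι : Type*} {V : ι → Type*} {G : ∀ i, SimpleGraph (V i)}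
    {x y : ∀ i, V i} : (piStrongProd G)ᶜ.Adj x y ↔ ∃ i, (G i)ᶜ.Adj (x i) (y i) := by
  simp only [piStrongProd, compl_adj, fromRel_adj, ne_eq]
  constructor
  · rintro ⟨hne, h⟩
    by_contra! hall
    refine h ⟨hne, Or.inl fun i => ?_⟩
    by_contra! hi
    exact hi.2 (hall i hi.1)
  · rintro ⟨i, hne, hadj⟩
    refine ⟨fun h => hne (congrFun h i), fun ⟨_, h⟩ => ?_⟩
    rcases h with h | h
    · exact (h i).elim hne hadj
    · exact (h i).elim (fun h => hne h.symm) fun h => hadj h.symm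

theorem strongPow_eq_piStrongProd {V : Type*} (G : SimpleGraph V) (n : ℕ) :
    strongPow G n = piStrongProd fun _ : Fin n => G :=
  rfl

variable {ι κ V : Type*} [Fintype V] [Fintype ι] [DecidableEq ι] [Fintype κ] [DecidableEq κ]
  {G : SimpleGraph V}

theorem indepNum_piStrongProd_le_of_hom_compl {W : Type*} [Fintype W] {H : SimpleGraph W}
    (f : Gᶜ →g Hᶜ) :
    indepNum (piStrongProd fun _ : ι => G) ≤ indepNum (piStrongProd fun _ : ι => H) :=
  indepNum_le_of_hom_compl
    { toFun := fun x i => f (x i)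
      map_rel' := fun h => by
        obtain ⟨i, hi⟩ := compl_piStrongProd_adj.1 h
        exact compl_piStrongProd_adj.2 ⟨i, f.map_adj hi⟩ }

theorem indepNum_piStrongProd_le_of_surjective (g : κ → ι) (hg : g.Surjective) :
    indepNum (piStrongProd fun _ : ι => G) ≤ indepNum (piStrongProd fun _ : κ => G) :=
  indepNum_le_of_hom_compl
    { toFun := fun x => x ∘ g
      map_rel' := fun h => by
        obtain ⟨i, hi⟩ := compl_piStrongProd_adj.1 h
        obtain ⟨j, rfl⟩ := hg i
        exact compl_piStrongProd_adj.2 ⟨j, hi⟩ }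

theorem indepNum_piStrongProd_congr (e : ι ≃ κ) :
    indepNum (piStrongProd fun _ : ι => G) = indepNum (piStrongProd fun _ : κ => G) :=
  (indepNum_piStrongProd_le_of_surjective e.symm e.symm.surjective).antisymm
    (indepNum_piStrongProd_le_of_surjective e e.surjective)

theorem indepNum_piStrongProd_mul_le :
    indepNum (piStrongProd fun _ : ι => G) * indepNum (piStrongProd fun _ : κ => G) ≤
      indepNum (piStrongProd fun _ : ι ⊕ κ => G) := by
  obtain ⟨s, hs⟩ := (piStrongProd fun _ : ι => G).exists_isNIndepSet_indepNum
  obtain ⟨t, ht⟩ := (piStrongProd fun _ : κ => G).exists_isNIndepSet_indepNum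
  let e := (Equiv.sumArrowEquivProdArrow ι κ V).symm.toEmbedding
  have hclique : (piStrongProd fun _ : ι ⊕ κ => G)ᶜ.IsClique ((s ×ˢ t).map e : Set _) := by
    rw [coe_map]
    rintro _ ⟨⟨x, y⟩, hxy, rfl⟩ _ ⟨⟨x', y'⟩, hxy', rfl⟩ hne
    simp only [coe_product, Set.mem_prod, mem_coe] at hxy hxy'
    by_cases hx : x = x'
    · have hy : y ≠ y' := fun hy => hne (by rw [hx, hy])
      obtain ⟨i, hi⟩ := compl_piStrongProd_adj.1
        ((isClique_compl _).2 ht.isIndepSet hxy.2 hxy'.2 hy)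
      exact compl_piStrongProd_adj.2 ⟨.inr i, hi⟩
    · obtain ⟨i, hi⟩ := compl_piStrongProd_adj.1
        ((isClique_compl _).2 hs.isIndepSet hxy.1 hxy'.1 hx)
      exact compl_piStrongProd_adj.2 ⟨.inl i, hi⟩
  rw [indepNum_eq_simpleGraph_indepNum, indepNum_eq_simpleGraph_indepNum, indepNum_eq_simpleGraph_indepNum, ← hs.card_eq,
    ← ht.card_eq, ← card_product, ← card_map e]
  exact ((isClique_compl _).1 hclique).card_le_indepNum

theorem indepNum_strongPow_mul_le (m n : ℕ) :
    indepNum (strongPow G m) * indepNum (strongPow G n) ≤ indepNum (strongPow G (m + n)) := by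
  simp only [strongPow_eq_piStrongProd]
  rw [indepNum_piStrongProd_congr (G := G) finSumFinEquiv.symm]
  exact indepNum_piStrongProd_mul_le

theorem pow_indepNum_strongPow_le [Nonempty V] (m q r : ℕ) :
    indepNum (strongPow G m) ^ q ≤ indepNum (strongPow G (m * q + r)) := by
  induction q with
  | zero => simpa using one_le_indepNum
  | succ q ih =>
    calc indepNum (strongPow G m) ^ (q + 1)
        ≤ indepNum (strongPow G (m * q + r)) * indepNum (strongPow G m) := by
          rw [pow_succ]
          exact Nat.mul_le_mul_right _ ih
      _ ≤ indepNum (strongPow G (m * (q + 1) + r)) := by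
          rw [show m * (q + 1) + r = m * q + r + m by ring]
          exact indepNum_strongPow_mul_le _ _

end StrongProduct

section ShannonCapacity

theorem rpow_one_div_succ_le_iff {x y : ℝ} (hx : 0 ≤ x) (hy : 0 ≤ y) (n : ℕ) :
    x ^ ((1 : ℝ) / (n + 1)) ≤ y ↔ x ≤ y ^ (n + 1) := by
  rw [one_div, Real.rpow_inv_le_iff_of_pos hx hy (by positivity), ← Real.rpow_natCast]
  push_cast
  rfl

theorem le_of_forall_pow_le_mul_pow {x y E : ℝ} (hx : 0 ≤ x) (h : ∀ n : ℕ, y ^ n ≤ E * x ^ n) :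
    y ≤ x := by
  by_contra! hxy
  rcases hx.eq_or_lt with rfl | hx
  · exact lt_irrefl _ (hxy.trans_le (by simpa using h 1))
  obtain ⟨n, hn⟩ := pow_unbounded_of_one_lt E ((one_lt_div hx).2 hxy)
  rw [div_pow, lt_div_iff₀ (by positivity)] at hn
  exact (h n).not_gt hn

variable {V W : Type*} [Fintype V] [Fintype W] {G : SimpleGraph V} {H : SimpleGraph W}

theorem bddAbove_range_shannonCapacity :
    BddAbove (Set.range fun n : ℕ => (indepNum (strongPow G (n + 1)) : ℝ) ^ ((1 : ℝ) / (n + 1))) := by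
  refine ⟨Fintype.card V, ?_⟩
  rintro _ ⟨n, rfl⟩
  rw [rpow_one_div_succ_le_iff (by positivity) (by positivity)]
  exact_mod_cast (indepNum_le_card (G := strongPow G (n + 1))).trans_eq (by simp)

theorem le_shannonCapacity (n : ℕ) :
    (indepNum (strongPow G (n + 1)) : ℝ) ^ ((1 : ℝ) / (n + 1)) ≤ shannonCapacity G :=
  le_ciSup bddAbove_range_shannonCapacity n

theorem shannonCapacity_nonneg : 0 ≤ shannonCapacity G :=
  (Real.rpow_nonneg (Nat.cast_nonneg _) _).trans (le_shannonCapacity 0)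

theorem indepNum_strongPow_le_shannonCapacity_pow (n : ℕ) :
    (indepNum (strongPow G n) : ℝ) ≤ shannonCapacity G ^ n := by
  cases n with
  | zero =>
    rw [pow_zero, ← Nat.cast_one, Nat.cast_le]
    exact (indepNum_le_card (G := strongPow G 0)).trans_eq (by simp)
  | succ n =>
    exact (rpow_one_div_succ_le_iff (Nat.cast_nonneg _) shannonCapacity_nonneg n).1
      (le_shannonCapacity n)

theorem shannonCapacity_le_of_forall_indepNum_le {x : ℝ} (hx : 0 ≤ x)
    (h : ∀ n, (indepNum (strongPow G n) : ℝ) ≤ x ^ n) : shannonCapacity G ≤ x :=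
  ciSup_le fun n => (rpow_one_div_succ_le_iff (Nat.cast_nonneg _) hx n).2 (h (n + 1))

theorem shannonCapacity_le_of_hom_compl (f : Gᶜ →g Hᶜ) : shannonCapacity G ≤ shannonCapacity H :=
  shannonCapacity_le_of_forall_indepNum_le shannonCapacity_nonneg fun n =>
    (Nat.cast_le.2 (indepNum_piStrongProd_le_of_hom_compl f)).trans
      (indepNum_strongPow_le_shannonCapacity_pow n)

theorem pow_le_mul_indepNum_strongPow [Nonempty V] {m : ℕ} (hm : 0 < m) (j : ℕ) :
    ((indepNum (strongPow G m) : ℝ) ^ ((1 : ℝ) / m)) ^ j ≤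
      indepNum (strongPow G m) * indepNum (strongPow G j) := by
  obtain ⟨q, s, hs, rfl⟩ : ∃ q s, s < m ∧ j = m * q + s :=
    ⟨j / m, j % m, Nat.mod_lt j hm, (Nat.div_add_mod j m).symm⟩
  have ha : (1 : ℝ) ≤ indepNum (strongPow G m) := by exact_mod_cast one_le_indepNum
  have hq : (indepNum (strongPow G m) : ℝ) ^ q ≤ indepNum (strongPow G (m * q + s)) := by
    exact_mod_cast pow_indepNum_strongPow_le m q s
  set a : ℝ := (indepNum (strongPow G m) : ℝ)
  have hr : 1 ≤ a ^ ((1 : ℝ) / m) := Real.one_le_rpow ha (by positivity)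
  have hrm : (a ^ ((1 : ℝ) / m)) ^ m = a := by
    rw [one_div, Real.rpow_inv_natCast_pow (by positivity) hm.ne']
  calc (a ^ ((1 : ℝ) / m)) ^ (m * q + s)
      ≤ (a ^ ((1 : ℝ) / m)) ^ (m * (q + 1)) := pow_le_pow_right₀ hr (by rw [Nat.mul_succ]; omega)
    _ = a * a ^ q := by rw [pow_mul, hrm, pow_succ']
    _ ≤ a * indepNum (strongPow G (m * q + s)) := by gcongr

end ShannonCapacity

section Fibers

variable {V κ : Type*} [Fintype V] [Fintype κ] {W : κ → Type*} [∀ k, Fintype (W k)]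
  {G : SimpleGraph V} {H : ∀ k, SimpleGraph (W k)}

theorem indepNum_le_sum_of_fibers (p : V → κ) (f : ∀ k, H k ↪g G)
    (hf : ∀ k, p ⁻¹' {k} ⊆ Set.range (f k)) :
    indepNum G ≤ ∑ k, indepNum (H k) := by
  classical
  obtain ⟨s, hs⟩ := G.exists_isNIndepSet_indepNum
  simp only [indepNum_eq_simpleGraph_indepNum]
  rw [← hs.card_eq, card_eq_sum_card_fiberwise (f := p) (t := univ) fun _ _ => mem_univ _]
  gcongr with k
  let t := univ.filter fun y => f k y ∈ s
  have hsub : s.filter (fun x => p x = k) ⊆ t.map (f k).toEmbedding := by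
    intro x hx
    obtain ⟨hxs, hpx⟩ := mem_filter.1 hx
    obtain ⟨y, rfl⟩ := hf k hpx
    exact mem_map_of_mem _ (by simpa [t] using hxs)
  have ht : (H k).IsIndepSet (t : Set (W k)) := fun y hy y' hy' hne hadj =>
    hs.isIndepSet (by simpa [t] using hy) (by simpa [t] using hy') ((f k).injective.ne hne)
      ((f k).map_adj_iff.2 hadj)
  exact (card_le_card hsub).trans ((card_map _).trans_le ht.card_le_indepNum)

theorem sum_le_indepNum_of_fibers (p : V → κ) (f : ∀ k, H k ↪g G) (hf : ∀ k y, p (f k y) = k)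
    (hG : ∀ x y, p x ≠ p y → ¬ G.Adj x y) :
    ∑ k, indepNum (H k) ≤ indepNum G := by
  classical
  choose t ht using fun k => (H k).exists_isNIndepSet_indepNum
  let s := univ.biUnion fun k => (t k).map (f k).toEmbedding
  have hdisj : ((univ : Finset κ) : Set κ).PairwiseDisjoint
      fun k => (t k).map (f k).toEmbedding := by
    intro k _ k' _ hne
    simp only [Function.onFun, Finset.disjoint_left, mem_map]
    rintro _ ⟨y, -, rfl⟩ ⟨y', -, hy'⟩
    exact hne ((hf k y).symm.trans (hy' ▸ hf k' y'))
  have hs : G.IsIndepSet (s : Set V) := by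
    intro x hx x' hx' hne
    simp only [s, mem_coe, mem_biUnion, mem_univ, true_and, mem_map,
      RelEmbedding.coe_toEmbedding] at hx hx'
    obtain ⟨k, y, hy, rfl⟩ := hx
    obtain ⟨k', y', hy', rfl⟩ := hx'
    by_cases hk : k = k'
    · subst hk
      rw [(f k).map_adj_iff]
      exact (ht k).isIndepSet hy hy' fun h => hne (h ▸ rfl)
    · exact hG _ _ (by rwa [hf, hf])
  simp only [indepNum_eq_simpleGraph_indepNum]
  calc ∑ k, (H k).indepNum = ∑ k, #((t k).map (f k).toEmbedding) := by
        simp only [card_map, (ht _).card_eq]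
    _ = #s := (card_biUnion hdisj).symm
    _ ≤ G.indepNum := hs.card_le_indepNum

end Fibers

section SumBot

variable {V W ι : Type*} (G : SimpleGraph V)

theorem compl_sum_bot_adj_of_getRight?_ne {a b : V ⊕ W} (h : a.getRight? ≠ b.getRight?) :
    (G ⊕g (⊥ : SimpleGraph W))ᶜ.Adj a b := by
  cases a <;> cases b <;> simp_all [compl_adj]

def fillPattern (w : ι → Option W) (y : {i // w i = none} → V) (i : ι) : V ⊕ W :=
  match h : w i with
  | none => .inl (y ⟨i, h⟩)
  | some b => .inr b

theorem getRight?_fillPattern (w : ι → Option W) (y : {i // w i = none} → V) (i : ι) :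
    (fillPattern w y i).getRight? = w i := by
  unfold fillPattern
  split <;> simp [*]

theorem fillPattern_of_eq_none {w : ι → Option W} (y : {i // w i = none} → V) {i : ι}
    (h : w i = none) : fillPattern w y i = .inl (y ⟨i, h⟩) := by
  unfold fillPattern
  split
  · rfl
  · simp_all

theorem fillPattern_of_eq_some {w : ι → Option W} (y : {i // w i = none} → V) {i : ι} {b : W}
    (h : w i = some b) : fillPattern w y i = .inr b :=
  Sum.getRight?_eq_some_iff.1 ((getRight?_fillPattern w y i).trans h)

theorem compl_adj_fillPattern_iff {w : ι → Option W} {y y' : {i // w i = none} → V} :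
    (piStrongProd fun _ : ι => G ⊕g (⊥ : SimpleGraph W))ᶜ.Adj (fillPattern w y)
        (fillPattern w y') ↔ (piStrongProd fun _ : {i // w i = none} => G)ᶜ.Adj y y' := by
  simp only [compl_piStrongProd_adj]
  constructor
  · rintro ⟨i, hi⟩
    cases h : w i with
    | none =>
      rw [fillPattern_of_eq_none y h, fillPattern_of_eq_none y' h] at hi
      exact ⟨⟨i, h⟩, by simpa [compl_adj] using hi⟩
    | some b =>
      rw [fillPattern_of_eq_some y h, fillPattern_of_eq_some y' h] at hi
      exact absurd hi (SimpleGraph.irrefl _)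
  · rintro ⟨⟨i, h⟩, hi⟩
    refine ⟨i, ?_⟩
    rw [fillPattern_of_eq_none y h, fillPattern_of_eq_none y' h]
    simpa [compl_adj] using hi

def fillPatternEmbedding (w : ι → Option W) :
    piStrongProd (fun _ : {i // w i = none} => G) ↪g
      piStrongProd fun _ : ι => G ⊕g (⊥ : SimpleGraph W) :=
  Embedding.complEquiv.symm
    { toFun := fillPattern w
      inj' := fun y y' h => funext fun s => Sum.inl_injective <| by
        rw [← fillPattern_of_eq_none y s.2, ← fillPattern_of_eq_none y' s.2, h]
      map_rel_iff' := compl_adj_fillPattern_iff G }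

theorem preimage_getRight?_subset_range_fillPattern (w : ι → Option W) :
    (fun x : ι → V ⊕ W => fun i => (x i).getRight?) ⁻¹' {w} ⊆ Set.range (fillPattern w) := by
  rintro x rfl
  refine ⟨fun s => (x s).getLeft (Sum.getRight?_eq_none_iff.1 s.2), funext fun i => ?_⟩
  cases h : (x i).getRight? with
  | none => simp [fillPattern_of_eq_none (w := fun i => (x i).getRight?) _ h]
  | some b =>
    exact (fillPattern_of_eq_some (w := fun i => (x i).getRight?) _ h).trans
      (Sum.getRight?_eq_some_iff.1 h).symm

variable [Fintype W]

theorem sum_pow_card_eq_none {R : Type*} [CommSemiring R] (x : R) (n : ℕ) :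
    ∑ w : Fin n → Option W, x ^ Fintype.card {i // w i = none} = (x + Fintype.card W) ^ n := by
  have hsum : x + Fintype.card W = ∑ o : Option W, if o = none then x else 1 := by
    simp [Fintype.sum_option]
  rw [hsum, Fintype.sum_pow]
  refine sum_congr rfl fun w _ => ?_
  rw [prod_ite, prod_const, prod_const_one, mul_one, Fintype.card_subtype]

variable [Fintype V] [Fintype ι] [DecidableEq ι]

theorem indepNum_piStrongProd_sum_bot :
    indepNum (piStrongProd fun _ : ι => G ⊕g (⊥ : SimpleGraph W)) =
      ∑ w : ι → Option W, indepNum (piStrongProd fun _ : {i // w i = none} => G) := by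
  let p (x : ι → V ⊕ W) (i : ι) := (x i).getRight?
  refine (indepNum_le_sum_of_fibers p (fillPatternEmbedding G)
    preimage_getRight?_subset_range_fillPattern).antisymm
    (sum_le_indepNum_of_fibers p (fillPatternEmbedding G)
      (fun w y => funext (getRight?_fillPattern w y)) fun x y hxy hadj => ?_)
  obtain ⟨i, hi⟩ := Function.ne_iff.1 hxy
  exact ((compl_adj _ _ _).1
    (compl_piStrongProd_adj.2 ⟨i, compl_sum_bot_adj_of_getRight?_ne G hi⟩)).2 hadj

theorem indepNum_strongPow_sum_bot (n : ℕ) :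
    indepNum (strongPow (G ⊕g (⊥ : SimpleGraph W)) n) =
      ∑ w : Fin n → Option W, indepNum (strongPow G (Fintype.card {i // w i = none})) := by
  rw [strongPow_eq_piStrongProd, indepNum_piStrongProd_sum_bot]
  refine sum_congr rfl fun w _ => ?_
  rw [strongPow_eq_piStrongProd, indepNum_piStrongProd_congr (Fintype.equivFin _)]

theorem shannonCapacity_sum_bot_le :
    shannonCapacity (G ⊕g (⊥ : SimpleGraph W)) ≤ shannonCapacity G + Fintype.card W :=
  shannonCapacity_le_of_forall_indepNum_le (add_nonneg shannonCapacity_nonneg (Nat.cast_nonneg _))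
    fun n => by
      rw [indepNum_strongPow_sum_bot, ← sum_pow_card_eq_none, Nat.cast_sum]
      gcongr with w
      exact indepNum_strongPow_le_shannonCapacity_pow _

theorem shannonCapacity_add_card_le [Nonempty V] :
    shannonCapacity G + Fintype.card W ≤ shannonCapacity (G ⊕g (⊥ : SimpleGraph W)) := by
  suffices h : ∀ m : ℕ, (indepNum (strongPow G (m + 1)) : ℝ) ^ ((1 : ℝ) / (m + 1)) +
      Fintype.card W ≤ shannonCapacity (G ⊕g (⊥ : SimpleGraph W)) from
    le_sub_iff_add_le.1 (ciSup_le fun m => le_sub_iff_add_le.2 (h m))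
  intro m
  have key (j : ℕ) : ((indepNum (strongPow G (m + 1)) : ℝ) ^ ((1 : ℝ) / (m + 1))) ^ j ≤
      indepNum (strongPow G (m + 1)) * indepNum (strongPow G j) := by
    exact_mod_cast pow_le_mul_indepNum_strongPow m.succ_pos j
  set a : ℝ := (indepNum (strongPow G (m + 1)) : ℝ)
  refine le_of_forall_pow_le_mul_pow (E := a) shannonCapacity_nonneg fun n => ?_
  calc (a ^ ((1 : ℝ) / (m + 1)) + Fintype.card W) ^ n
      = ∑ w : Fin n → Option W, (a ^ ((1 : ℝ) / (m + 1))) ^ Fintype.card {i // w i = none} :=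
        (sum_pow_card_eq_none _ n).symm
    _ ≤ ∑ w : Fin n → Option W, a * indepNum (strongPow G (Fintype.card {i // w i = none})) := by
        gcongr with w
        exact key _
    _ = a * indepNum (strongPow (G ⊕g (⊥ : SimpleGraph W)) n) := by
        rw [indepNum_strongPow_sum_bot, Nat.cast_sum, mul_sum]
    _ ≤ a * shannonCapacity (G ⊕g (⊥ : SimpleGraph W)) ^ n := by
        gcongr
        exact indepNum_strongPow_le_shannonCapacity_pow n

theorem shannonCapacity_sum_bot [Nonempty V] :
    shannonCapacity (G ⊕g (⊥ : SimpleGraph W)) = shannonCapacity G + Fintype.card W :=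
  (shannonCapacity_sum_bot_le G).antisymm (shannonCapacity_add_card_le G)

end SumBot

section Tadpole

theorem tadpole_adj_castLE_iff {k l : ℕ} {u v : Fin k} :
    (tadpole k l).Adj (u.castLE (Nat.le_add_right k l)) (v.castLE (Nat.le_add_right k l)) ↔
      (cycleGraph k).Adj u v := by
  have hu := u.isLt
  have hv := v.isLt
  simp only [tadpole, fromRel_adj, Fin.val_castLE, ne_eq, Fin.castLE_inj, hu, hv,
    true_and, not_le.2 hu, not_le.2 hv, false_and, hu.ne, hv.ne, and_false,
    or_false]
  match k, u, v with
  | 1, u, v => simp [Subsingleton.elim u v]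
  | n + 2, u, v =>
    have key (a b : Fin (n + 2)) : (a.val + 1) % (n + 2) = b.val ↔ b - a = 1 := by
      rw [sub_eq_iff_eq_add', Fin.ext_iff, Fin.val_add, Fin.val_one, eq_comm]
    rw [key, key, cycleGraph_adj, or_comm, and_iff_right_iff_imp]
    rintro h rfl
    simp at h

theorem shannonCapacity_tadpole_le_sum_bot (k c : ℕ) :
    shannonCapacity (tadpole k (2 * c)) ≤
      shannonCapacity (cycleGraph k ⊕g (⊥ : SimpleGraph (Fin c))) :=
  shannonCapacity_le_of_hom_compl
    { toFun := fun x => if hx : x.val < k then .inl ⟨x, hx⟩ else .inr ⟨(x.val - k) / 2, by omega⟩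
      map_rel' := fun {x y} hxy => by
        rw [compl_adj] at hxy ⊢
        obtain ⟨hne, hadj⟩ := hxy
        split_ifs with hx hy hy
        · rw [sum_adj_inl, ← tadpole_adj_castLE_iff (l := 2 * c)]
          exact ⟨fun h => hne (Fin.ext (by simpa using h)), hadj⟩
        · simp
        · simp
        · simp only [ne_eq, Sum.inr.injEq, Fin.mk.injEq, sum_adj_inr, bot_adj, not_false_eq_true,
            and_true]
          intro h
          refine hadj ⟨hne, ?_⟩
          omega }

theorem shannonCapacity_sum_bot_le_tadpole (k c : ℕ) :
    shannonCapacity (cycleGraph k ⊕g (⊥ : SimpleGraph (Fin c))) ≤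
      shannonCapacity (tadpole k (2 * c)) :=
  shannonCapacity_le_of_hom_compl
    { toFun := Sum.elim (Fin.castLE (Nat.le_add_right k _)) fun u => ⟨k + 2 * u + 1, by omega⟩
      map_rel' := fun {a b} hab => by
        rw [compl_adj] at hab ⊢
        rcases a with u | u <;> rcases b with v | v
        · rw [sum_adj_inl] at hab
          exact ⟨fun h => hab.1 (congrArg _ (Fin.castLE_injective (Nat.le_add_right k _) h)),
            tadpole_adj_castLE_iff.not.2 hab.2⟩
        all_goals
          simp only [ne_eq, Sum.inr.injEq, Fin.ext_iff] at hab
          simp only [Sum.elim_inl, Sum.elim_inr, tadpole, fromRel_adj, ne_eq, Fin.ext_iff,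
            Fin.val_castLE]
          omega }

theorem shannonCapacity_tadpole {k : ℕ} (hk : 0 < k) (c : ℕ) :
    shannonCapacity (tadpole k (2 * c)) = shannonCapacity (cycleGraph k) + c := by
  have : Nonempty (Fin k) := ⟨⟨0, hk⟩⟩
  rw [(shannonCapacity_tadpole_le_sum_bot k c).antisymm (shannonCapacity_sum_bot_le_tadpole k c),
    shannonCapacity_sum_bot, Fintype.card_fin]

end Tadpole

theorem capacity_tadpole_odd_even_general (k l : ℕ) (hk : 5 ≤ k) (hleven : Even l) :
    shannonCapacity (tadpole k l) = shannonCapacity (SimpleGraph.cycleGraph k) + (l : ℝ) / 2 := by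
  obtain ⟨c, rfl⟩ := hleven.two_dvd
  rw [shannonCapacity_tadpole (by omega)]
  push_cast
  ring

theorem capacity_tadpole_odd_even (k l : ℕ) (hk : 5 ≤ k) (hkodd : Odd k) (hleven : Even l) :
    shannonCapacity (tadpole k l) = shannonCapacity (SimpleGraph.cycleGraph k) + (l : ℝ) / 2 :=
  capacity_tadpole_odd_even_general k l hk hleven

end Paper
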